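/- Let (P_n) be strongly invariant for the system (A) and let h, k be growth rates. The pair (A,P) is (h,k)-dichotomic if and only if there exist a sequence of norms 𝒩 = {|||·|||_n : n ∈ ℕ} compatible with (P_n) and a nondecreasing sequence b : ℕ → [1,∞) such that Σ_{j=0}^{n} h_m|||A_m^j P_j x|||_m ≤ b_n h_n|||x|||_n and Σ_{j=0}^{n} (1/k_j)|||B_m^j Q_m x|||_j ≤ (b_m/k_m)|||x|||_m for all m ≥ n and all x ∈ X. -/

import Mathlib

open ContinuousLinearMap Filter

noncomputable section

variable {X : Type*} [NormedAddCommGroup X] [NormedSpace ℝ X]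

/-- The evolution operator `A_m^n` associated to the linear difference system
`x_{n+1} = A_n x_n`: `A_m^n = A_{m-1} ⋯ A_n` for `m > n` and `A_n^n = I`. -/
def evol (A : ℕ → X →L[ℝ] X) : ℕ → ℕ → X →L[ℝ] X
  | 0, _ => 1
  | m + 1, n => if m + 1 ≤ n then 1 else A m ∘L evol A m n

/-- `P` is a projectors sequence. -/
def ProjSeq (P : ℕ → X →L[ℝ] X) : Prop := ∀ n, P n ∘L P n = P n

/-- The projectors sequence `P` is invariant for the system `(A)`. -/
def InvariantFor (A P : ℕ → X →L[ℝ] X) : Prop := ∀ n, A n ∘L P n = P (n + 1) ∘L A n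

/-- The projectors sequence `P` is strongly invariant for the system `(A)`: it is invariant and
the restriction of `A_m^n` to `Ker P_n` is an isomorphism from `Ker P_n` onto `Ker P_m`. -/
def StronglyInvariantFor (A P : ℕ → X →L[ℝ] X) : Prop :=
  InvariantFor A P ∧ ∀ m n : ℕ, n ≤ m →
    Set.BijOn (evol A m n) (LinearMap.ker (P n : X →ₗ[ℝ] X) : Set X) (LinearMap.ker (P m : X →ₗ[ℝ] X) : Set X)

/-- A growth rate: an increasing sequence with values in `[1, ∞)` tending to `∞`. -/
def IsGrowthRate (h : ℕ → ℝ) : Prop :=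
  StrictMono h ∧ (∀ n, 1 ≤ h n) ∧ Tendsto h atTop atTop

/-- The pair `(A, P)` is `(h,k)`-dichotomic. -/
def Dichotomic (A P : ℕ → X →L[ℝ] X) (h k : ℕ → ℝ) : Prop :=
  ∃ d : ℕ → ℝ, (∀ n, 1 ≤ d n) ∧ Monotone d ∧
    ∀ m n : ℕ, n ≤ m → ∀ x : X,
      h m * ‖evol A m n (P n x)‖ ≤ d n * (h n * ‖P n x‖) ∧
      k m * ‖(1 - P n) x‖ ≤ d m * (k n * ‖evol A m n ((1 - P n) x)‖)

/-- The pair `(A, P)` is uniformly `(h,k)`-dichotomic. -/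
def UniformDichotomic (A P : ℕ → X →L[ℝ] X) (h k : ℕ → ℝ) : Prop :=
  ∃ d : ℝ, 1 ≤ d ∧
    ∀ m n : ℕ, n ≤ m → ∀ x : X,
      h m * ‖evol A m n (P n x)‖ ≤ d * (h n * ‖P n x‖) ∧
      k m * ‖(1 - P n) x‖ ≤ d * (k n * ‖evol A m n ((1 - P n) x)‖)

/-- The pair `(A, P)` has `(h,k)`-growth. -/
def HasGrowth (A P : ℕ → X →L[ℝ] X) (h k : ℕ → ℝ) : Prop :=
  ∃ g : ℕ → ℝ, (∀ n, 1 ≤ g n) ∧ Monotone g ∧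
    ∀ m n : ℕ, n ≤ m → ∀ x : X,
      h n * ‖evol A m n (P n x)‖ ≤ g n * (h m * ‖P n x‖) ∧
      k n * ‖(1 - P n) x‖ ≤ g m * (k m * ‖evol A m n ((1 - P n) x)‖)

/-- `N` is a sequence of norms on `X`. -/
def IsNormSeq (N : ℕ → X → ℝ) : Prop :=
  ∀ n, (∀ x y, N n (x + y) ≤ N n x + N n y) ∧
    (∀ (a : ℝ) (x : X), N n (a • x) = |a| * N n x) ∧
    (∀ x, N n x = 0 ↔ x = 0)

/-- The sequence of norms `N` is compatible with the projectors sequence `P`. -/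
def NormsCompatible (N : ℕ → X → ℝ) (P : ℕ → X →L[ℝ] X) : Prop :=
  IsNormSeq N ∧ ∃ c : ℕ → ℝ, (∀ n, 1 ≤ c n) ∧ Monotone c ∧
    ∀ (n : ℕ) (x : X), ‖x‖ ≤ N n x ∧ N n x ≤ c n * (‖P n x‖ + ‖(1 - P n) x‖)

/-- The defining properties of the skew-evolution operator `B` associated to the pair `(A, P)`:
`A_m^n B_m^n Q_m = Q_m`, `B_m^n A_m^n Q_n = Q_n` and `B_m^n Q_m = Q_n B_m^n Q_m` for `m ≥ n`,
where `Q_n = I - P_n`. -/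
def SkewEvol (A P : ℕ → X →L[ℝ] X) (B : ℕ → ℕ → X →L[ℝ] X) : Prop :=
  ∀ m n : ℕ, n ≤ m →
    evol A m n ∘L (B m n ∘L (1 - P m)) = 1 - P m ∧
    B m n ∘L (evol A m n ∘L (1 - P n)) = 1 - P n ∧
    B m n ∘L (1 - P m) = (1 - P n) ∘L (B m n ∘L (1 - P m))

/-!
For the direct implication take `|||·|||_n = ‖·‖`. Each of the `n + 1` terms of the first sum is
bounded by the first dichotomy estimate, and each term of the second by the second estimate
applied to `B_m^j Q_m x`, which lies in `Ker P_j` and is mapped by `A_m^j` to `Q_m x`. The factor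
`n + 1`, the dichotomy constant and a bound for `‖P_j‖`, `j ≤ n`, all nondecreasing in `n`, are
absorbed into `b`.

Conversely, the `j = n` terms of the two sums, evaluated at `P_n x` and at `A_m^n Q_n x`, are the
two dichotomy estimates in the norms `|||·|||`; on the ranges of `P_n` and `Q_n` compatibility
gives `|||·|||_n ≤ c_n ‖·‖`, so the estimates hold in `‖·‖` with constant `b c`.
-/

open Finset

namespace ProjSeq

variable {P : ℕ → X →L[ℝ] X}

lemma apply_apply (hP : ProjSeq P) (n : ℕ) (x : X) : P n (P n x) = P n x := by
  simpa using congrArg (· x) (hP n)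

lemma compl_apply_apply (hP : ProjSeq P) (n : ℕ) (x : X) : (1 - P n) (P n x) = 0 := by
  rw [sub_apply, one_apply_eq_self, hP.apply_apply, sub_self]

lemma apply_compl_apply (hP : ProjSeq P) (n : ℕ) (x : X) : P n ((1 - P n) x) = 0 := by
  rw [sub_apply, one_apply_eq_self, map_sub, hP.apply_apply, sub_self]

lemma compl_apply_compl_apply (hP : ProjSeq P) (n : ℕ) (x : X) :
    (1 - P n) ((1 - P n) x) = (1 - P n) x := by
  rw [sub_apply (1 : X →L[ℝ] X), hP.apply_compl_apply, one_apply_eq_self, sub_zero]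

lemma le_mul_norm_apply {N : X → ℝ} {c : ℝ} (hP : ProjSeq P) {n : ℕ}
    (hN : ∀ x, N x ≤ c * (‖P n x‖ + ‖(1 - P n) x‖)) (x : X) : N (P n x) ≤ c * ‖P n x‖ := by
  simpa only [hP.apply_apply, hP.compl_apply_apply, norm_zero, add_zero] using hN (P n x)

lemma le_mul_norm_compl_apply {N : X → ℝ} {c : ℝ} (hP : ProjSeq P) {n : ℕ}
    (hN : ∀ x, N x ≤ c * (‖P n x‖ + ‖(1 - P n) x‖)) (x : X) :
    N ((1 - P n) x) ≤ c * ‖(1 - P n) x‖ := by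
  simpa only [hP.apply_compl_apply, hP.compl_apply_compl_apply, norm_zero, zero_add]
    using hN ((1 - P n) x)

end ProjSeq

lemma evol_self (A : ℕ → X →L[ℝ] X) (n : ℕ) : evol A n n = 1 := by
  cases n <;> simp [evol]

lemma evol_succ_of_le (A : ℕ → X →L[ℝ] X) {m n : ℕ} (hnm : n ≤ m) :
    evol A (m + 1) n = A m ∘L evol A m n := by
  simp only [evol, if_neg (by omega : ¬ m + 1 ≤ n)]

namespace InvariantFor

variable {A P : ℕ → X →L[ℝ] X}

lemma evol_apply_apply (hinv : InvariantFor A P) {m n : ℕ} (hnm : n ≤ m) (x : X) :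
    evol A m n (P n x) = P m (evol A m n x) := by
  induction m, hnm using Nat.le_induction with
  | base => simp [evol_self]
  | succ m hnm ih =>
    simpa [evol_succ_of_le A hnm, ih] using congrArg (· (evol A m n x)) (hinv m)

lemma evol_compl_apply (hinv : InvariantFor A P) {m n : ℕ} (hnm : n ≤ m) (x : X) :
    evol A m n ((1 - P n) x) = (1 - P m) (evol A m n x) := by
  simp [hinv.evol_apply_apply hnm]

end InvariantFor

namespace SkewEvol

variable {A P : ℕ → X →L[ℝ] X} {B : ℕ → ℕ → X →L[ℝ] X}

lemma evol_apply (hB : SkewEvol A P B) {m n : ℕ} (hnm : n ≤ m) (x : X) :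
    evol A m n (B m n ((1 - P m) x)) = (1 - P m) x :=
  congrArg (· x) (hB m n hnm).1

lemma apply_evol_apply (hB : SkewEvol A P B) {m n : ℕ} (hnm : n ≤ m) (x : X) :
    B m n (evol A m n ((1 - P n) x)) = (1 - P n) x :=
  congrArg (· x) (hB m n hnm).2.1

lemma compl_apply (hB : SkewEvol A P B) {m n : ℕ} (hnm : n ≤ m) (x : X) :
    (1 - P n) (B m n ((1 - P m) x)) = B m n ((1 - P m) x) :=
  (congrArg (· x) (hB m n hnm).2.2).symm

end SkewEvol

def projBound (P : ℕ → X →L[ℝ] X) (n : ℕ) : ℝ := 1 + ∑ j ∈ range (n + 1), ‖P j‖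

section projBound

variable {P : ℕ → X →L[ℝ] X}

lemma one_le_projBound (n : ℕ) : 1 ≤ projBound P n :=
  le_add_of_nonneg_right (sum_nonneg fun _ _ => norm_nonneg _)

lemma monotone_projBound : Monotone (projBound P) := fun _ _ hab => by
  unfold projBound
  gcongr

lemma one_add_norm_le_projBound {j n : ℕ} (hjn : j ≤ n) : 1 + ‖P j‖ ≤ projBound P n := by
  unfold projBound
  gcongr
  exact single_le_sum (f := fun i => ‖P i‖) (fun _ _ => norm_nonneg _) (mem_range.mpr (by omega))

lemma norm_apply_le_projBound {j n : ℕ} (hjn : j ≤ n) (x : X) :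
    ‖P j x‖ ≤ projBound P n * ‖x‖ :=
  (P j).le_of_opNorm_le (by linarith [one_add_norm_le_projBound (P := P) hjn]) x

lemma norm_compl_apply_le_projBound (n : ℕ) (x : X) :
    ‖(1 - P n) x‖ ≤ projBound P n * ‖x‖ :=
  calc ‖(1 - P n) x‖ = ‖x - P n x‖ := by rw [sub_apply, one_apply_eq_self]
    _ ≤ ‖x‖ + ‖P n‖ * ‖x‖ := (norm_sub_le _ _).trans (by gcongr; exact (P n).le_opNorm x)
    _ = (1 + ‖P n‖) * ‖x‖ := by ring
    _ ≤ projBound P n * ‖x‖ := by gcongr; exact one_add_norm_le_projBound le_rfl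

end projBound

lemma normsCompatible_norm (P : ℕ → X →L[ℝ] X) : NormsCompatible (fun _ x => ‖x‖) P := by
  refine ⟨fun _ => ⟨norm_add_le, fun a x => by simp only [norm_smul, Real.norm_eq_abs],
    fun _ => norm_eq_zero⟩, fun _ => 1, fun _ => le_rfl, monotone_const, fun n x => ⟨le_rfl, ?_⟩⟩
  calc ‖x‖ = ‖P n x + (1 - P n) x‖ := by rw [sub_apply, one_apply_eq_self, add_sub_cancel]
    _ ≤ ‖P n x‖ + ‖(1 - P n) x‖ := norm_add_le _ _
    _ = 1 * (‖P n x‖ + ‖(1 - P n) x‖) := (one_mul _).symm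

def AdmitsSumNorms (A P : ℕ → X →L[ℝ] X) (B : ℕ → ℕ → X →L[ℝ] X) (h k : ℕ → ℝ) : Prop :=
  ∃ N : ℕ → X → ℝ, NormsCompatible N P ∧
    ∃ b : ℕ → ℝ, (∀ n, 1 ≤ b n) ∧ Monotone b ∧
      ∀ m n : ℕ, n ≤ m → ∀ x : X,
        ∑ j ∈ range (n + 1), h m * N m (evol A m j (P j x)) ≤ b n * (h n * N n x) ∧
        ∑ j ∈ range (n + 1), N j (B m j ((1 - P m) x)) / k j ≤ b m * (N m x / k m)

section Dichotomy

variable {A P : ℕ → X →L[ℝ] X} {B : ℕ → ℕ → X →L[ℝ] X} {h k d : ℕ → ℝ}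

lemma sum_mul_norm_evol_apply_le (hd : Monotone d) (hd0 : ∀ n, 0 ≤ d n) (hh : Monotone h)
    (hh0 : ∀ n, 0 ≤ h n)
    (hstable : ∀ m n, n ≤ m → ∀ x : X, h m * ‖evol A m n (P n x)‖ ≤ d n * (h n * ‖P n x‖))
    {m n : ℕ} (hnm : n ≤ m) (x : X) :
    ∑ j ∈ range (n + 1), h m * ‖evol A m j (P j x)‖ ≤
      (n + 1) * d n * projBound P n * (h n * ‖x‖) :=
  calc ∑ j ∈ range (n + 1), h m * ‖evol A m j (P j x)‖
      ≤ ∑ _j ∈ range (n + 1), d n * (h n * (projBound P n * ‖x‖)) := by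
        refine sum_le_sum fun j hj => ?_
        have hjn : j ≤ n := Nat.lt_succ_iff.mp (mem_range.mp hj)
        calc h m * ‖evol A m j (P j x)‖ ≤ d j * (h j * ‖P j x‖) := hstable m j (hjn.trans hnm) x
          _ ≤ d n * (h n * (projBound P n * ‖x‖)) := by
            gcongr
            · exact mul_nonneg (hh0 j) (norm_nonneg _)
            · exact hd0 n
            · exact hd hjn
            · exact hh0 n
            · exact hh hjn
            · exact norm_apply_le_projBound hjn x
    _ = (n + 1) * d n * projBound P n * (h n * ‖x‖) := by
        rw [sum_const, card_range, nsmul_eq_mul]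
        push_cast
        ring

lemma sum_norm_skewEvol_apply_div_le (hB : SkewEvol A P B) (hd0 : ∀ n, 0 ≤ d n)
    (hk0 : ∀ n, 0 < k n)
    (hunstable : ∀ m n, n ≤ m → ∀ x : X,
      k m * ‖(1 - P n) x‖ ≤ d m * (k n * ‖evol A m n ((1 - P n) x)‖))
    {m n : ℕ} (hnm : n ≤ m) (x : X) :
    ∑ j ∈ range (n + 1), ‖B m j ((1 - P m) x)‖ / k j ≤
      (m + 1) * d m * projBound P m * (‖x‖ / k m) := by
  have hterm : ∀ j ≤ m, ‖B m j ((1 - P m) x)‖ / k j ≤ d m * projBound P m * (‖x‖ / k m) := by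
    intro j hjm
    have hy := hunstable m j hjm (B m j ((1 - P m) x))
    rw [hB.compl_apply hjm, hB.evol_apply hjm] at hy
    rw [div_le_iff₀ (hk0 j)]
    calc ‖B m j ((1 - P m) x)‖ = k m * ‖B m j ((1 - P m) x)‖ / k m :=
          (mul_div_cancel_left₀ _ (hk0 m).ne').symm
      _ ≤ d m * (k j * ‖(1 - P m) x‖) / k m := div_le_div_of_nonneg_right hy (hk0 m).le
      _ ≤ d m * (k j * (projBound P m * ‖x‖)) / k m := by
          gcongr
          · exact (hk0 m).le
          · exact hd0 m
          · exact (hk0 j).le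
          · exact norm_compl_apply_le_projBound m x
      _ = d m * projBound P m * (‖x‖ / k m) * k j := by ring
  have hC : 0 ≤ d m * projBound P m * (‖x‖ / k m) :=
    mul_nonneg (mul_nonneg (hd0 m) (zero_le_one.trans (one_le_projBound m)))
      (div_nonneg (norm_nonneg x) (hk0 m).le)
  calc ∑ j ∈ range (n + 1), ‖B m j ((1 - P m) x)‖ / k j
      ≤ ∑ _j ∈ range (n + 1), d m * projBound P m * (‖x‖ / k m) :=
        sum_le_sum fun j hj => hterm j (by have := mem_range.mp hj; omega)
    _ = (n + 1) * (d m * projBound P m * (‖x‖ / k m)) := by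
        rw [sum_const, card_range, nsmul_eq_mul]
        push_cast
        ring
    _ ≤ (m + 1) * (d m * projBound P m * (‖x‖ / k m)) := by gcongr
    _ = (m + 1) * d m * projBound P m * (‖x‖ / k m) := by ring

theorem Dichotomic.admitsSumNorms (hB : SkewEvol A P B) (hh : Monotone h) (hh0 : ∀ n, 0 ≤ h n)
    (hk0 : ∀ n, 0 < k n) (hdich : Dichotomic A P h k) : AdmitsSumNorms A P B h k := by
  obtain ⟨d, hd1, hd, hdich⟩ := hdich
  have hd0 : ∀ n, 0 ≤ d n := fun n => zero_le_one.trans (hd1 n)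
  refine ⟨fun _ x => ‖x‖, normsCompatible_norm P, fun n => (n + 1) * d n * projBound P n,
    fun n => ?_, fun a b hab => ?_, fun m n hnm x =>
      ⟨sum_mul_norm_evol_apply_le hd hd0 hh hh0 (fun m n hnm x => (hdich m n hnm x).1) hnm x,
        sum_norm_skewEvol_apply_div_le hB hd0 hk0 (fun m n hnm x => (hdich m n hnm x).2) hnm x⟩⟩
  · have hn : (1 : ℝ) ≤ n + 1 := le_add_of_nonneg_left n.cast_nonneg
    exact one_le_mul_of_one_le_of_one_le (one_le_mul_of_one_le_of_one_le hn (hd1 n))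
      (one_le_projBound n)
  · have hab' : (a : ℝ) + 1 ≤ b + 1 := by exact_mod_cast Nat.succ_le_succ hab
    exact mul_le_mul (mul_le_mul hab' (hd hab) (hd0 a) (by positivity)) (monotone_projBound hab)
      (zero_le_one.trans (one_le_projBound a)) (mul_nonneg (by positivity) (hd0 b))

lemma mul_norm_evol_apply_le_of_sum_le {N : ℕ → X → ℝ} {b c : ℕ → ℝ} (hP : ProjSeq P)
    (hNc : ∀ n x, ‖x‖ ≤ N n x ∧ N n x ≤ c n * (‖P n x‖ + ‖(1 - P n) x‖))
    (hb0 : ∀ n, 0 ≤ b n) (hh0 : ∀ n, 0 ≤ h n)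
    (hsum : ∀ m n, n ≤ m → ∀ x : X,
      ∑ j ∈ range (n + 1), h m * N m (evol A m j (P j x)) ≤ b n * (h n * N n x))
    {m n : ℕ} (hnm : n ≤ m) (x : X) :
    h m * ‖evol A m n (P n x)‖ ≤ b n * c n * (h n * ‖P n x‖) := by
  have hterm : h m * N m (evol A m n (P n x)) ≤ b n * (h n * N n (P n x)) := by
    refine le_trans ?_ (hsum m n hnm (P n x))
    simpa only [hP.apply_apply] using single_le_sum
      (f := fun j => h m * N m (evol A m j (P j (P n x))))
      (fun j _ => mul_nonneg (hh0 m) ((norm_nonneg _).trans (hNc m _).1)) (self_mem_range_succ n)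
  calc h m * ‖evol A m n (P n x)‖ ≤ h m * N m (evol A m n (P n x)) :=
        mul_le_mul_of_nonneg_left (hNc m _).1 (hh0 m)
    _ ≤ b n * (h n * N n (P n x)) := hterm
    _ ≤ b n * (h n * (c n * ‖P n x‖)) := by
        gcongr
        · exact hb0 n
        · exact hh0 n
        · exact hP.le_mul_norm_apply (fun y => (hNc n y).2) x
    _ = b n * c n * (h n * ‖P n x‖) := by ring

lemma mul_norm_compl_apply_le_of_sum_le {N : ℕ → X → ℝ} {b c : ℕ → ℝ} (hP : ProjSeq P)
    (hinv : InvariantFor A P) (hB : SkewEvol A P B)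
    (hNc : ∀ n x, ‖x‖ ≤ N n x ∧ N n x ≤ c n * (‖P n x‖ + ‖(1 - P n) x‖))
    (hb0 : ∀ n, 0 ≤ b n) (hk0 : ∀ n, 0 < k n)
    (hsum : ∀ m n, n ≤ m → ∀ x : X,
      ∑ j ∈ range (n + 1), N j (B m j ((1 - P m) x)) / k j ≤ b m * (N m x / k m))
    {m n : ℕ} (hnm : n ≤ m) (x : X) :
    k m * ‖(1 - P n) x‖ ≤ b m * c m * (k n * ‖evol A m n ((1 - P n) x)‖) := by
  have hy : (1 - P m) (evol A m n ((1 - P n) x)) = evol A m n ((1 - P n) x) := by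
    rw [hinv.evol_compl_apply hnm, hP.compl_apply_compl_apply]
  set y := evol A m n ((1 - P n) x)
  have hBy : B m n ((1 - P m) y) = (1 - P n) x := by
    rw [hy, hB.apply_evol_apply hnm]
  have hterm : N n ((1 - P n) x) / k n ≤ b m * (N m y / k m) := by
    refine le_trans ?_ (hsum m n hnm y)
    simpa only [hBy] using single_le_sum
      (f := fun j => N j (B m j ((1 - P m) y)) / k j)
      (fun j _ => div_nonneg ((norm_nonneg _).trans (hNc j _).1) (hk0 j).le)
      (self_mem_range_succ n)
  have hNy : N m y ≤ c m * ‖y‖ := by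
    simpa only [hy] using hP.le_mul_norm_compl_apply (fun z => (hNc m z).2) y
  have hdiv : ‖(1 - P n) x‖ / k n ≤ b m * c m * ‖y‖ / k m :=
    calc ‖(1 - P n) x‖ / k n ≤ N n ((1 - P n) x) / k n :=
          div_le_div_of_nonneg_right (hNc n _).1 (hk0 n).le
      _ ≤ b m * (N m y / k m) := hterm
      _ ≤ b m * (c m * ‖y‖ / k m) := by
          gcongr
          · exact hb0 m
          · exact (hk0 m).le
      _ = b m * c m * ‖y‖ / k m := by ring
  rw [div_le_div_iff₀ (hk0 n) (hk0 m)] at hdiv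
  linarith

theorem Dichotomic.of_admitsSumNorms (hP : ProjSeq P) (hinv : InvariantFor A P)
    (hB : SkewEvol A P B) (hh0 : ∀ n, 0 ≤ h n) (hk0 : ∀ n, 0 < k n)
    (hN : AdmitsSumNorms A P B h k) : Dichotomic A P h k := by
  obtain ⟨N, ⟨-, c, hc1, hc, hNc⟩, b, hb1, hb, hsum⟩ := hN
  have hb0 : ∀ n, 0 ≤ b n := fun n => zero_le_one.trans (hb1 n)
  refine ⟨b * c, fun n => one_le_mul_of_one_le_of_one_le (hb1 n) (hc1 n),
    hb.mul hc hb0 fun n => zero_le_one.trans (hc1 n), fun m n hnm x => ⟨?_, ?_⟩⟩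
  · exact mul_norm_evol_apply_le_of_sum_le hP hNc hb0 hh0
      (fun m n hnm x => (hsum m n hnm x).1) hnm x
  · exact mul_norm_compl_apply_le_of_sum_le hP hinv hB hNc hb0 hk0
      (fun m n hnm x => (hsum m n hnm x).2) hnm x

end Dichotomy

theorem stmt_16_general (A P : ℕ → X →L[ℝ] X) (B : ℕ → ℕ → X →L[ℝ] X)
    (hP : ProjSeq P) (hSI : StronglyInvariantFor A P) (hB : SkewEvol A P B)
    (h k : ℕ → ℝ) (hh : IsGrowthRate h) (hk : IsGrowthRate k) :
    Dichotomic A P h k ↔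
      ∃ N : ℕ → X → ℝ, NormsCompatible N P ∧
        ∃ b : ℕ → ℝ, (∀ n, 1 ≤ b n) ∧ Monotone b ∧
          ∀ m n : ℕ, n ≤ m → ∀ x : X,
            (∑ j ∈ Finset.range (n + 1), h m * N m (evol A m j (P j x))) ≤
              b n * (h n * N n x) ∧
            (∑ j ∈ Finset.range (n + 1), N j (B m j ((1 - P m) x)) / k j) ≤
              b m * (N m x / k m) := by
  have hh0 : ∀ n, 0 ≤ h n := fun n => zero_le_one.trans (hh.2.1 n)
  have hk0 : ∀ n, 0 < k n := fun n => zero_lt_one.trans_le (hk.2.1 n)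
  exact ⟨Dichotomic.admitsSumNorms hB hh.1.monotone hh0 hk0,
    Dichotomic.of_admitsSumNorms hP hSI.1 hB hh0 hk0⟩

theorem stmt_16 [CompleteSpace X] (A P : ℕ → X →L[ℝ] X) (B : ℕ → ℕ → X →L[ℝ] X)
    (hP : ProjSeq P) (hSI : StronglyInvariantFor A P) (hB : SkewEvol A P B)
    (h k : ℕ → ℝ) (hh : IsGrowthRate h) (hk : IsGrowthRate k) :
    Dichotomic A P h k ↔
      ∃ N : ℕ → X → ℝ, NormsCompatible N P ∧
        ∃ b : ℕ → ℝ, (∀ n, 1 ≤ b n) ∧ Monotone b ∧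
          ∀ m n : ℕ, n ≤ m → ∀ x : X,
            (∑ j ∈ Finset.range (n + 1), h m * N m (evol A m j (P j x))) ≤
              b n * (h n * N n x) ∧
            (∑ j ∈ Finset.range (n + 1), N j (B m j ((1 - P m) x)) / k j) ≤
              b m * (N m x / k m) :=
  stmt_16_general A P B hP hSI hB h k hh hk

end
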